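/- arXiv:2411.11542 — 5 statements merged into one kernel-verified Lean document; each statement's English description precedes it below -/
import Mathlib

section
/- Let S ⊆ ℝ^{m×n} be a linear subspace with basis S₁,…,S_k, and let S = [S₁ S₂ … S_k] ∈ ℝ^{m×nk} be their horizontal concatenation. Suppose R ∈ ℝ^{n×n} is invertible and there exists a symmetric matrix Λ ∈ ℝ^{k×k} such that S(I_k ⊗ R) = S(Λ ⊗ I_n). Then for every L ∈ S, the matrix L R⁻¹ belongs to S. -/
open Matrix Kronecker

/-- If `R` is invertible and there is a symmetric `Λ` with
`S (I_k ⊗ R) = S (Λ ⊗ I_n)`, then `L ∈ 𝒮` implies `L R⁻¹ ∈ 𝒮`. -/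
theorem structured_preservation
    (m n k : ℕ)
    (𝒮 : Submodule ℝ (Matrix (Fin m) (Fin n) ℝ))
    (Sb : Fin k → Matrix (Fin m) (Fin n) ℝ)
    (hspan : Submodule.span ℝ (Set.range Sb) = 𝒮)
    (Smat : Matrix (Fin m) (Fin k × Fin n) ℝ)
    (hSmat : ∀ i l j, Smat i (l, j) = Sb l i j)
    (R : Matrix (Fin n) (Fin n) ℝ) (hR : IsUnit R.det)
    (Λ : Matrix (Fin k) (Fin k) ℝ) (hΛ : Λᵀ = Λ)
    (hcond : Smat * ((1 : Matrix (Fin k) (Fin k) ℝ) ⊗ₖ R)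
           = Smat * (Λ ⊗ₖ (1 : Matrix (Fin n) (Fin n) ℝ))) :
    ∀ L ∈ 𝒮, L * R⁻¹ ∈ 𝒮 := by
  -- right multiplication by R as a linear map
  let f : Matrix (Fin m) (Fin n) ℝ →ₗ[ℝ] Matrix (Fin m) (Fin n) ℝ :=
    { toFun := fun X => X * R
      map_add' := fun X Y => Matrix.add_mul X Y R
      map_smul' := fun c X => Matrix.smul_mul c X R }
  -- each basis matrix maps into 𝒮
  have hbasis : ∀ l, Sb l * R = ∑ p, Λ p l • Sb p := by
    intro l
    ext i j
    have h := congrFun (congrFun hcond i) (l, j)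
    simp only [mul_apply, Fintype.sum_prod_type, kroneckerMap_apply, one_apply, hSmat,
      mul_ite, mul_one, mul_zero, ite_mul, zero_mul, one_mul, Finset.sum_ite_eq,
      Finset.sum_ite_eq', Finset.mem_univ, if_true] at h
    rw [Finset.sum_comm] at h
    simp only [Finset.sum_ite_eq', Finset.mem_univ, if_true] at h
    rw [Matrix.mul_apply]
    rw [show (∑ p, Λ p l • Sb p) i j = ∑ p, Sb p i j * Λ p l by
      simp [Matrix.sum_apply, Matrix.smul_apply, smul_eq_mul, mul_comm]]
    exact h
  have hmap : Submodule.map f 𝒮 ≤ 𝒮 := by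
    rw [← hspan, Submodule.map_span]
    apply Submodule.span_le.2
    rintro _ ⟨_, ⟨l, rfl⟩, rfl⟩
    show Sb l * R ∈ _
    rw [hbasis l]
    exact Submodule.sum_mem _ fun p _ =>
      Submodule.smul_mem _ _ (Submodule.subset_span ⟨p, rfl⟩)
  have hinj : Function.Injective f := by
    intro X Y hXY
    have h2 : X * R * R⁻¹ = Y * R * R⁻¹ := by
      show f X * R⁻¹ = f Y * R⁻¹; rw [hXY]
    rwa [Matrix.mul_nonsing_inv_cancel_right _ _ hR,
      Matrix.mul_nonsing_inv_cancel_right _ _ hR] at h2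
  have heq : Submodule.map f 𝒮 = 𝒮 := by
    apply Submodule.eq_of_le_of_finrank_le hmap
    exact le_of_eq (LinearEquiv.finrank_eq (Submodule.equivMapOfInjective f hinj 𝒮))
  intro L hL
  rw [← heq] at hL
  obtain ⟨X, hX, hXL⟩ := hL
  have : L * R⁻¹ = X := by
    rw [← hXL]; exact Matrix.mul_nonsing_inv_cancel_right _ _ hR
  rwa [this]
end

section
/- Let A ∈ ℝ^{n×n}, E ∈ ℝ^{n×z}, and suppose there exist symmetric P ∈ ℝ^{n×n} and R ∈ ℝ^{n×n} such that the block matrix [[P − E Eᵀ, A R], [Rᵀ Aᵀ, R + Rᵀ − P]] is positive definite. Then the spectral radius of A is strictly less than 1 (A is Schur stable). -/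
/-!
Let `u ≠ 0` be a left eigenvector, `uᴴ A = μ uᴴ`, and let `q` be the Hermitian form of the LMI
matrix. On `(-μ u, u)` the eigenvector relation turns the off-diagonal terms together with the
`P`-term of the first block into `-|μ|² q(0, u)`, so that
`q(-μ u, u) = (1 - |μ|²) q(0, u) - |μ|² uᴴ E Eᴴ u`. Both `q(-μ u, u)` and `q(0, u)` are positive
and `uᴴ E Eᴴ u ≥ 0`, which forces `|μ| < 1`. The real LMI is used through its complexification,
which is again positive definite.
-/

open Matrix RCLike
open scoped ComplexOrder

namespace Matrix

variable {m n : Type*} [Fintype m] [Fintype n]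

theorem star_sumElim_dotProduct_fromBlocks_mulVec {α : Type*} [CommSemiring α] [StarRing α]
    (A : Matrix m m α) (B : Matrix m n α) (C : Matrix n m α) (D : Matrix n n α)
    (x : m → α) (y : n → α) :
    star (x ⊕ᵥ y) ⬝ᵥ fromBlocks A B C D *ᵥ (x ⊕ᵥ y) =
      star x ⬝ᵥ A *ᵥ x + star x ⬝ᵥ B *ᵥ y + (star y ⬝ᵥ C *ᵥ x + star y ⬝ᵥ D *ᵥ y) := by
  simp only [Function.star_sumElim, fromBlocks_mulVec, sumElim_dotProduct_sumElim, dotProduct_add,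
    Sum.elim_comp_inl, Sum.elim_comp_inr]

theorem star_dotProduct_conjTranspose_mulVec {α : Type*} [CommSemiring α] [StarRing α]
    (M : Matrix m n α) (x : m → α) (y : n → α) :
    star y ⬝ᵥ Mᴴ *ᵥ x = star (star x ⬝ᵥ M *ᵥ y) := by
  rw [star_dotProduct, star_mulVec, conjTranspose_conjTranspose, dotProduct_mulVec]

theorem exists_vecMul_eq_smul_of_mem_spectrum {K : Type*} [Field K] [DecidableEq n]
    {A : Matrix n n K} {μ : K} (hμ : μ ∈ spectrum K A) : ∃ v ≠ 0, v ᵥ* A = μ • v := by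
  rw [spectrum.mem_iff, isUnit_iff_isUnit_det, isUnit_iff_ne_zero, not_not,
    ← exists_vecMul_eq_zero_iff] at hμ
  obtain ⟨v, hv0, hv⟩ := hμ
  refine ⟨v, hv0, ?_⟩
  rw [vecMul_sub, Algebra.algebraMap_eq_smul_one, vecMul_smul, vecMul_one, sub_eq_zero] at hv
  exact hv.symm

variable {𝕜 : Type*} [RCLike 𝕜]

theorem re_star_dotProduct_map_ofReal_mulVec (M : Matrix n n ℝ) (z : n → 𝕜) :
    re (star z ⬝ᵥ M.map ((↑) : ℝ → 𝕜) *ᵥ z) =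
      (re ∘ z) ⬝ᵥ M *ᵥ (re ∘ z) + (im ∘ z) ⬝ᵥ M *ᵥ (im ∘ z) := by
  simp only [dotProduct, mulVec, map_sum, Finset.mul_sum, ← Finset.sum_add_distrib, map_apply,
    Pi.star_apply, Function.comp_apply]
  refine Finset.sum_congr rfl fun i _ => Finset.sum_congr rfl fun j _ => ?_
  simp only [mul_re, ofReal_re, ofReal_im, im_ofReal_mul, star_def, conj_re, conj_im]
  ring

theorem PosDef.map_ofReal {M : Matrix n n ℝ} (hM : M.PosDef) : (M.map ((↑) : ℝ → 𝕜)).PosDef := by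
  have hH : (M.map ((↑) : ℝ → 𝕜)).IsHermitian := hM.isHermitian.map _ fun r => by simp
  refine posDef_iff_dotProduct_mulVec.2 ⟨hH, fun z hz => pos_iff.2
    ⟨?_, hH.im_star_dotProduct_mulVec_self z⟩⟩
  have hpos : ∀ x : n → ℝ, x ≠ 0 → 0 < x ⬝ᵥ M *ᵥ x := fun x hx => by
    simpa using hM.dotProduct_mulVec_pos hx
  have hnonneg : ∀ x : n → ℝ, 0 ≤ x ⬝ᵥ M *ᵥ x := fun x => by
    simpa using hM.posSemidef.dotProduct_mulVec_nonneg x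
  rw [re_star_dotProduct_map_ofReal_mulVec]
  by_cases hre : re ∘ z = 0
  · have him : im ∘ z ≠ 0 := fun him => hz <| funext fun i =>
      RCLike.ext (by simpa using congrFun hre i) (by simpa using congrFun him i)
    exact add_pos_of_nonneg_of_pos (hnonneg _) (hpos _ him)
  · exact add_pos_of_pos_of_nonneg (hpos _ hre) (hnonneg _)

end Matrix

section SchurStabilityLMI

variable {n 𝕜 : Type*} [Fintype n] [RCLike 𝕜]

def schurStabilityLMI (A P R F : Matrix n n 𝕜) : Matrix (n ⊕ n) (n ⊕ n) 𝕜 :=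
  fromBlocks (P - F) (A * R) (Rᴴ * Aᴴ) (R + Rᴴ - P)

theorem star_dotProduct_schurStabilityLMI_mulVec_of_vecMul_eq_smul (A P R F : Matrix n n 𝕜)
    {μ : 𝕜} {u : n → 𝕜} (hu : star u ᵥ* A = μ • star u) :
    star ((-μ • u) ⊕ᵥ u) ⬝ᵥ schurStabilityLMI A P R F *ᵥ ((-μ • u) ⊕ᵥ u) =
      ((1 - ‖μ‖ ^ 2 : ℝ) : 𝕜) * (star u ⬝ᵥ (R + Rᴴ - P) *ᵥ u) -
        (‖μ‖ ^ 2 : ℝ) * (star u ⬝ᵥ F *ᵥ u) := by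
  have hcross : star (-μ • u) ⬝ᵥ (A * R) *ᵥ u = -(‖μ‖ ^ 2 : ℝ) * (star u ⬝ᵥ R *ᵥ u) := by
    rw [← mulVec_mulVec, star_smul, star_neg, neg_smul, neg_dotProduct, smul_dotProduct,
      dotProduct_mulVec, hu, smul_dotProduct, smul_eq_mul, smul_eq_mul, ← mul_assoc,
      star_def, RCLike.conj_mul]
    push_cast
    ring
  have hdiag : star (-μ • u) ⬝ᵥ (P - F) *ᵥ (-μ • u) =
      (‖μ‖ ^ 2 : ℝ) * (star u ⬝ᵥ (P - F) *ᵥ u) := by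
    rw [star_smul, mulVec_smul, smul_dotProduct, dotProduct_smul, smul_eq_mul, smul_eq_mul,
      ← mul_assoc, star_neg, neg_mul_neg, star_def, RCLike.conj_mul]
    push_cast
    ring
  rw [schurStabilityLMI, star_sumElim_dotProduct_fromBlocks_mulVec, ← conjTranspose_mul,
    star_dotProduct_conjTranspose_mulVec, hcross, hdiag]
  simp only [sub_mulVec, add_mulVec, dotProduct_sub, dotProduct_add,
    star_dotProduct_conjTranspose_mulVec, star_mul', star_neg, star_def, conj_ofReal]
  push_cast
  ring

theorem norm_lt_one_of_mem_spectrum_of_posDef_schurStabilityLMI [DecidableEq n]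
    {A P R F : Matrix n n 𝕜} (hF : F.PosSemidef) (h : (schurStabilityLMI A P R F).PosDef)
    {μ : 𝕜} (hμ : μ ∈ spectrum 𝕜 A) : ‖μ‖ < 1 := by
  obtain ⟨v, hv0, hv⟩ := exists_vecMul_eq_smul_of_mem_spectrum hμ
  obtain ⟨u, rfl⟩ : ∃ u, v = star u := ⟨star v, (star_star v).symm⟩
  have hne : ∀ x : n → 𝕜, x ⊕ᵥ u ≠ 0 := fun x h0 =>
    star_ne_zero.1 hv0 (funext fun i => congrFun h0 (Sum.inr i))
  have hright : 0 < re (star u ⬝ᵥ (R + Rᴴ - P) *ᵥ u) := by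
    simpa [schurStabilityLMI, star_sumElim_dotProduct_fromBlocks_mulVec] using
      h.re_dotProduct_pos (hne 0)
  have htest := h.re_dotProduct_pos (hne (-μ • u))
  rw [star_dotProduct_schurStabilityLMI_mulVec_of_vecMul_eq_smul A P R F hv, map_sub,
    re_ofReal_mul, re_ofReal_mul] at htest
  have hpos : 0 < (1 - ‖μ‖ ^ 2) * re (star u ⬝ᵥ (R + Rᴴ - P) *ᵥ u) := by
    nlinarith [mul_nonneg (sq_nonneg ‖μ‖) (hF.re_dotProduct_nonneg u)]
  have hsq : 0 < 1 - ‖μ‖ ^ 2 := (pos_iff_pos_of_mul_pos hpos).2 hright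
  exact (sq_lt_one_iff₀ (norm_nonneg μ)).1 (by linarith)

end SchurStabilityLMI

theorem schur_stability_from_LMI_general
    (n z : ℕ) (A : Matrix (Fin n) (Fin n) ℝ) (E : Matrix (Fin n) (Fin z) ℝ)
    (P R : Matrix (Fin n) (Fin n) ℝ)
    (h : (Matrix.fromBlocks (P - E * Eᵀ) (A * R) (Rᵀ * Aᵀ) (R + Rᵀ - P)).PosDef) :
    ∀ μ ∈ spectrum ℂ (A.map (Complex.ofReal ·)), ‖μ‖ < 1 := by
  intro μ hμ
  refine norm_lt_one_of_mem_spectrum_of_posDef_schurStabilityLMI (P := P.map (↑))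
    (R := R.map (↑)) (posSemidef_self_mul_conjTranspose (E.map ((↑) : ℝ → ℂ))) ?_ hμ
  convert h.map_ofReal (𝕜 := ℂ) using 1
  simp only [schurStabilityLMI, fromBlocks_map, fromBlocks_inj]
  refine ⟨?_, ?_, ?_, ?_⟩ <;> ext <;> simp [mul_apply, mul_comm]

/-- If the block LMI `[[P - EEᵀ, AR], [RᵀAᵀ, R + Rᵀ - P]] ≻ 0` is feasible for
some symmetric `P`, then `A` is Schur stable: all (complex) eigenvalues of `A`
lie strictly inside the unit disk. -/
theorem schur_stability_from_LMI
    (n z : ℕ) (A : Matrix (Fin n) (Fin n) ℝ) (E : Matrix (Fin n) (Fin z) ℝ)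
    (P R : Matrix (Fin n) (Fin n) ℝ) (hP : Pᵀ = P)
    (h : (Matrix.fromBlocks (P - E * Eᵀ) (A * R) (Rᵀ * Aᵀ) (R + Rᵀ - P)).PosDef) :
    ∀ μ ∈ spectrum ℂ (A.map (Complex.ofReal ·)), ‖μ‖ < 1 :=
  schur_stability_from_LMI_general n z A E P R h
end

section
/- Let Φ = [[Φ₁₁, Φ₁₂], [Φ₁₂ᵀ, Φ₂₂]] ∈ Sym(n+T) with Φ₁₁ ⪰ 0 and Φ₂₂ ≺ 0. Then the set of matrices W ∈ ℝ^{n×T} satisfying [I, W] Φ [I, W]ᵀ ⪰ 0 (where [I, W] denotes the n×(n+T) horizontal concatenation) is a bounded set. -/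
/-!
Completing the square with `W₀ = Φ₁₂ Φ₂₂⁻¹` rewrites the QMI matrix as
`C - (W + W₀) (-Φ₂₂) (W + W₀)ᵀ` with `C = Φ₁₁ - Φ₁₂ Φ₂₂⁻¹ Φ₁₂ᵀ`, so by the Schur complement the QMI
says that the block matrix `[[C, W + W₀], [(W + W₀)ᵀ, (-Φ₂₂)⁻¹]]` is positive semidefinite.
Its `2 × 2` principal minors then give `(W + W₀)ᵢⱼ² ≤ Cᵢᵢ (-Φ₂₂)⁻¹ⱼⱼ`, a bound independent of `W`.
-/

open Matrix

namespace Matrix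

variable {m n : Type*}

theorem PosSemidef.sq_apply_le_mul_diag {M : Matrix n n ℝ} (hM : M.PosSemidef) (i j : n) :
    M i j ^ 2 ≤ M i i * M j j := by
  have hdet := (hM.submatrix ![i, j]).det_nonneg
  have hsymm : M j i = M i j := hM.isHermitian.apply i j
  rw [det_fin_two] at hdet
  simp only [submatrix_apply, cons_val_zero, cons_val_one, hsymm] at hdet
  nlinarith

variable [Fintype n] [DecidableEq n]

theorem add_mul_transpose_add_eq {Φ11 : Matrix m m ℝ} {Φ12 : Matrix m n ℝ} {Φ22 : Matrix n n ℝ}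
    (hsymm : Φ22ᵀ = Φ22) (hunit : IsUnit Φ22.det) (W : Matrix m n ℝ) :
    Φ11 + W * Φ12ᵀ + Φ12 * Wᵀ + W * Φ22 * Wᵀ =
      Φ11 - Φ12 * Φ22⁻¹ * Φ12ᵀ + (W + Φ12 * Φ22⁻¹) * Φ22 * (W + Φ12 * Φ22⁻¹)ᵀ := by
  have hinv_symm : Φ22⁻¹ᵀ = Φ22⁻¹ := by rw [transpose_nonsing_inv, hsymm]
  simp only [transpose_add, transpose_mul, hinv_symm, Matrix.add_mul, Matrix.mul_add,
    Matrix.mul_assoc, nonsing_inv_mul _ hunit, mul_nonsing_inv_cancel_left _ _ hunit,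
    Matrix.one_mul]
  abel

variable [Fintype m]

theorem posSemidef_add_mul_transpose_iff_fromBlocks {Φ11 : Matrix m m ℝ} {Φ12 : Matrix m n ℝ}
    {Φ22 : Matrix n n ℝ} (h22 : (-Φ22).PosDef) (W : Matrix m n ℝ) :
    (Φ11 + W * Φ12ᵀ + Φ12 * Wᵀ + W * Φ22 * Wᵀ).PosSemidef ↔
      (fromBlocks (Φ11 - Φ12 * Φ22⁻¹ * Φ12ᵀ) (W + Φ12 * Φ22⁻¹) (W + Φ12 * Φ22⁻¹)ᵀ
        (-Φ22)⁻¹).PosSemidef := by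
  have hsymm : Φ22ᵀ = Φ22 := by
    simpa [conjTranspose_eq_transpose_of_trivial] using h22.isHermitian.eq
  have hunit : IsUnit Φ22.det := (isUnit_iff_isUnit_det _).mp (by simpa using h22.isUnit.neg)
  let := h22.inv.isUnit.invertible
  rw [add_mul_transpose_add_eq hsymm hunit,
    ← conjTranspose_eq_transpose_of_trivial (W + Φ12 * Φ22⁻¹), PosDef.fromBlocks₂₂ _ _ h22.inv,
    nonsing_inv_nonsing_inv _ ((isUnit_iff_isUnit_det _).mp h22.isUnit), Matrix.mul_neg,
    Matrix.neg_mul, sub_neg_eq_add]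

end Matrix

theorem qmi_set_bounded_general
    (n T : ℕ) (Φ11 : Matrix (Fin n) (Fin n) ℝ) (Φ12 : Matrix (Fin n) (Fin T) ℝ)
    (Φ22 : Matrix (Fin T) (Fin T) ℝ)
    (h22 : (-Φ22).PosDef) :
    ∃ c : ℝ, ∀ W : Matrix (Fin n) (Fin T) ℝ,
      (Φ11 + W * Φ12ᵀ + Φ12 * Wᵀ + W * Φ22 * Wᵀ).PosSemidef →
      ∀ i j, |W i j| ≤ c := by
  set C := Φ11 - Φ12 * Φ22⁻¹ * Φ12ᵀ
  set W₀ := Φ12 * Φ22⁻¹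
  obtain ⟨c, hc⟩ := Finite.exists_le fun p : Fin n × Fin T =>
    |W₀ p.1 p.2| + √(C p.1 p.1 * (-Φ22)⁻¹ p.2 p.2)
  refine ⟨c, fun W hW i j => le_trans ?_ (hc (i, j))⟩
  have hentry := ((posSemidef_add_mul_transpose_iff_fromBlocks h22 W).mp hW).sq_apply_le_mul_diag
    (Sum.inl i) (Sum.inr j)
  simp only [fromBlocks_apply₁₁, fromBlocks_apply₁₂, fromBlocks_apply₂₂] at hentry
  calc |W i j| = |(W + W₀) i j - W₀ i j| := by simp
    _ ≤ |(W + W₀) i j| + |W₀ i j| := abs_sub _ _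
    _ ≤ |W₀ i j| + √(C i i * (-Φ22)⁻¹ j j) := by linarith [Real.abs_le_sqrt hentry]

/-- If `Φ₁₁ ⪰ 0` and `Φ₂₂ ≺ 0`, then the set of matrices `W` satisfying the
QMI `Φ₁₁ + W Φ₁₂ᵀ + Φ₁₂ Wᵀ + W Φ₂₂ Wᵀ ⪰ 0` is bounded. -/
theorem qmi_set_bounded
    (n T : ℕ) (Φ11 : Matrix (Fin n) (Fin n) ℝ) (Φ12 : Matrix (Fin n) (Fin T) ℝ)
    (Φ22 : Matrix (Fin T) (Fin T) ℝ)
    (h11 : Φ11.PosSemidef) (h22 : (-Φ22).PosDef) :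
    ∃ c : ℝ, ∀ W : Matrix (Fin n) (Fin T) ℝ,
      (Φ11 + W * Φ12ᵀ + Φ12 * Wᵀ + W * Φ22 * Wᵀ).PosSemidef →
      ∀ i j, |W i j| ≤ c :=
  qmi_set_bounded_general n T Φ11 Φ12 Φ22 h22
end

section
/- Let A ∈ ℝ^{n×n}, B ∈ ℝ^{n×m}, E ∈ ℝ^{n×z}, P ∈ Sym(n), R ∈ ℝ^{n×n}, L ∈ ℝ^{m×n}, and suppose R + Rᵀ − P ≻ 0. Then the block matrix [[P − EEᵀ, AR + BL], [(AR + BL)ᵀ, R + Rᵀ − P]] is positive definite if and only if [I, Aᵀ, Bᵀ]-quadratic form holds: the matrix diag(P − EEᵀ, −[R; L](R + Rᵀ − P)⁻¹[R; L]ᵀ) ∈ Sym(2n+m), sandwiched as [I; Aᵀ; Bᵀ]ᵀ (·) [I; Aᵀ; Bᵀ], is positive definite. -/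
/-!
With `S = R + Rᵀ - P` and `M = A R + B L`, the identity `[Aᵀ; Bᵀ]ᵀ [R; L] = M` shows that the
sandwiched block-diagonal matrix equals `P - E Eᵀ - M S⁻¹ Mᵀ`, the Schur complement of `S` in the
LMI block. Since `S ≻ 0`, a unit block-triangular congruence takes the LMI block to
`blockdiag (P - E Eᵀ - M S⁻¹ Mᵀ, S)`, which is positive definite exactly when the Schur
complement is.
-/

open Matrix

namespace Matrix

variable {k m n α R : Type*} [Fintype m] [Fintype n]

theorem fromRows_transpose_mul_fromBlocks_zero_mul_fromRows [Semiring α]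
    (X : Matrix m k α) (Y : Matrix n k α) (Q : Matrix m m α) (D : Matrix n n α) :
    (fromRows X Y)ᵀ * fromBlocks Q 0 0 D * fromRows X Y = Xᵀ * Q * X + Yᵀ * D * Y := by
  rw [Matrix.mul_assoc, fromBlocks_mul_fromRows, transpose_fromRows, fromCols_mul_fromRows]
  simp [Matrix.mul_assoc]

variable [CommRing R] [PartialOrder R] [StarRing R] [StarOrderedRing R]

theorem posDef_fromBlocks_zero_iff {A : Matrix m m R} {D : Matrix n n R} :
    (fromBlocks A 0 0 D).PosDef ↔ A.PosDef ∧ D.PosDef := by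
  refine ⟨fun h => ⟨h.submatrix Sum.inl_injective, h.submatrix Sum.inr_injective⟩,
    fun ⟨hA, hD⟩ => ?_⟩
  refine .of_dotProduct_mulVec_pos (hA.1.fromBlocks (by simp) hD.1) fun x hx => ?_
  obtain ⟨x₁, x₂, rfl⟩ : ∃ x₁ x₂, x = Sum.elim x₁ x₂ := ⟨_, _, (Sum.elim_comp_inl_inr x).symm⟩
  simp only [fromBlocks_mulVec, Sum.elim_comp_inl, Sum.elim_comp_inr, zero_mulVec, add_zero,
    zero_add, Function.star_sumElim, sumElim_dotProduct_sumElim]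
  obtain rfl | hx₁ := eq_or_ne x₁ 0
  · have hx₂ : x₂ ≠ 0 := by rintro rfl; exact hx Sum.elim_zero_zero
    simpa using hD.dotProduct_mulVec_pos hx₂
  · exact add_pos_of_pos_of_nonneg (hA.dotProduct_mulVec_pos hx₁)
      (hD.posSemidef.dotProduct_mulVec_nonneg x₂)

theorem PosDef.posDef_fromBlocks₂₂_iff [DecidableEq m] [DecidableEq n] {D : Matrix n n R}
    (hD : D.PosDef) [Invertible D] (A : Matrix m m R) (B : Matrix m n R) :
    (fromBlocks A B Bᴴ D).PosDef ↔ (A - B * D⁻¹ * Bᴴ).PosDef := by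
  set U : Matrix (m ⊕ n) (m ⊕ n) R := fromBlocks 1 0 (D⁻¹ * Bᴴ) 1
  have hU : IsUnit U := by simp [U, isUnit_iff_isUnit_det]
  have hfactor : fromBlocks A B Bᴴ D = star U * fromBlocks (A - B * D⁻¹ * Bᴴ) 0 0 D * U := by
    rw [fromBlocks_eq_of_invertible₂₂, invOf_eq_nonsing_inv]
    simp [U, star_eq_conjTranspose, fromBlocks_conjTranspose, hD.1.inv.eq]
  rw [hfactor, hU.posDef_star_left_conjugate_iff, posDef_fromBlocks_zero_iff, and_iff_left hD]

end Matrix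

theorem lmi_qmi_equivalence_general
    (n m z : ℕ)
    (A : Matrix (Fin n) (Fin n) ℝ) (B : Matrix (Fin n) (Fin m) ℝ)
    (E : Matrix (Fin n) (Fin z) ℝ)
    (P R : Matrix (Fin n) (Fin n) ℝ) (L : Matrix (Fin m) (Fin n) ℝ)
    (hRRP : (R + Rᵀ - P).PosDef) :
    (Matrix.fromBlocks (P - E * Eᵀ) (A * R + B * L)
        (A * R + B * L)ᵀ (R + Rᵀ - P)).PosDef ↔
      (let RL : Matrix (Fin n ⊕ Fin m) (Fin n) ℝ := Matrix.fromRows R L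
       let D : Matrix (Fin n ⊕ (Fin n ⊕ Fin m)) (Fin n ⊕ (Fin n ⊕ Fin m)) ℝ :=
         Matrix.fromBlocks (P - E * Eᵀ) 0 0 (-(RL * (R + Rᵀ - P)⁻¹ * RLᵀ))
       let Z : Matrix (Fin n ⊕ (Fin n ⊕ Fin m)) (Fin n) ℝ :=
         Matrix.fromRows (1 : Matrix (Fin n) (Fin n) ℝ) (Matrix.fromRows Aᵀ Bᵀ)
       (Zᵀ * D * Z).PosDef) := by
  set S := R + Rᵀ - P
  set M := A * R + B * L
  have hM : (fromRows Aᵀ Bᵀ)ᵀ * fromRows R L = M := by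
    rw [transpose_fromRows, transpose_transpose, transpose_transpose, fromCols_mul_fromRows]
  have hsandwich : (fromRows Aᵀ Bᵀ)ᵀ * -(fromRows R L * S⁻¹ * (fromRows R L)ᵀ) * fromRows Aᵀ Bᵀ =
      -(M * S⁻¹ * Mᵀ) := by
    rw [← hM, transpose_mul, transpose_transpose]
    simp only [Matrix.mul_neg, Matrix.neg_mul, Matrix.mul_assoc]
  have := hRRP.isUnit.invertible
  dsimp only
  rw [fromRows_transpose_mul_fromBlocks_zero_mul_fromRows, hsandwich, transpose_one,
    Matrix.one_mul, Matrix.mul_one, ← sub_eq_add_neg, ← conjTranspose_eq_transpose_of_trivial]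
  exact hRRP.posDef_fromBlocks₂₂_iff _ _

/-- The closed-loop `H₂` LMI block is positive definite iff the corresponding
quadratic matrix inequality in `(A, B)` is (strictly) satisfied. -/
theorem lmi_qmi_equivalence
    (n m z : ℕ)
    (A : Matrix (Fin n) (Fin n) ℝ) (B : Matrix (Fin n) (Fin m) ℝ)
    (E : Matrix (Fin n) (Fin z) ℝ)
    (P R : Matrix (Fin n) (Fin n) ℝ) (L : Matrix (Fin m) (Fin n) ℝ)
    (hP : Pᵀ = P) (hRRP : (R + Rᵀ - P).PosDef) :
    (Matrix.fromBlocks (P - E * Eᵀ) (A * R + B * L)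
        (A * R + B * L)ᵀ (R + Rᵀ - P)).PosDef ↔
      (let RL : Matrix (Fin n ⊕ Fin m) (Fin n) ℝ := Matrix.fromRows R L
       let D : Matrix (Fin n ⊕ (Fin n ⊕ Fin m)) (Fin n ⊕ (Fin n ⊕ Fin m)) ℝ :=
         Matrix.fromBlocks (P - E * Eᵀ) 0 0 (-(RL * (R + Rᵀ - P)⁻¹ * RLᵀ))
       let Z : Matrix (Fin n ⊕ (Fin n ⊕ Fin m)) (Fin n) ℝ :=
         Matrix.fromRows (1 : Matrix (Fin n) (Fin n) ℝ) (Matrix.fromRows Aᵀ Bᵀ)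
       (Zᵀ * D * Z).PosDef) :=
  lmi_qmi_equivalence_general n m z A B E P R L hRRP
end

section
/- Let M ∈ Sym(p+q) be a symmetric block matrix [[M₁₁, M₁₂],[M₁₂ᵀ, M₂₂]] and N ∈ Sym(p+q) similarly partitioned with N₂₂ ≺ 0 (generalized Slater-type condition assumed: there exists Z̄ with [I, Z̄] N [I, Z̄]ᵀ ≻ 0). If there exist scalars α ≥ 0 and β > 0 such that M − αN ⪰ diag(βI_p, 0), then for every Z ∈ ℝ^{p×q} with [I, Z] N [I, Z]ᵀ ⪰ 0 it holds that [I, Z] M [I, Z]ᵀ ≻ 0. -/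
open Matrix

/-! Conjugating the certificate by `C = [I, Z]` gives
`C M Cᵀ ⪰ α • C N Cᵀ + C diag(βI, 0) Cᵀ = α • C N Cᵀ + βI`, and the right-hand side is positive
definite as soon as `C N Cᵀ ⪰ 0`. -/

namespace Matrix

variable {m n R : Type*} [Fintype m] [Fintype n]

theorem posDef_mul_mul_conjTranspose_of_posSemidef_sub_smul_sub [CommRing R] [PartialOrder R]
    [StarRing R] [StarOrderedRing R] {M N D : Matrix n n R} (C : Matrix m n R) {α : R}
    (hα : 0 ≤ α) (hcert : (M - α • N - D).PosSemidef) (hN : (C * N * Cᴴ).PosSemidef)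
    (hD : (C * D * Cᴴ).PosDef) : (C * M * Cᴴ).PosDef := by
  have hsplit : C * M * Cᴴ = C * (M - α • N - D) * Cᴴ + α • (C * N * Cᴴ) + C * D * Cᴴ := by
    simp only [Matrix.mul_sub, Matrix.sub_mul, Matrix.mul_smul, Matrix.smul_mul]
    abel
  rw [hsplit]
  exact .posSemidef_add ((hcert.mul_mul_conjTranspose_same C).add (hN.smul hα)) hD

theorem fromCols_one_mul_fromBlocks_zero_mul_transpose [DecidableEq m] [CommRing R]
    (A : Matrix m m R) (Z : Matrix m n R) :
    fromCols (1 : Matrix m m R) Z * fromBlocks A 0 0 (0 : Matrix n n R) *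
      (fromCols (1 : Matrix m m R) Z)ᵀ = A := by
  rw [transpose_fromCols, fromCols_mul_fromBlocks, fromCols_mul_fromRows]
  simp

end Matrix

theorem matrix_s_lemma_sufficiency_general
    (p q : ℕ)
    (M N : Matrix (Fin p ⊕ Fin q) (Fin p ⊕ Fin q) ℝ)
    (α β : ℝ) (hα : 0 ≤ α) (hβ : 0 < β)
    (hcert : (M - α • N -
      Matrix.fromBlocks (β • (1 : Matrix (Fin p) (Fin p) ℝ)) 0 0 0).PosSemidef) :
    ∀ Z : Matrix (Fin p) (Fin q) ℝ,
      ((Matrix.fromCols (1 : Matrix (Fin p) (Fin p) ℝ) Z) * N *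
       (Matrix.fromCols (1 : Matrix (Fin p) (Fin p) ℝ) Z)ᵀ).PosSemidef →
      ((Matrix.fromCols (1 : Matrix (Fin p) (Fin p) ℝ) Z) * M *
       (Matrix.fromCols (1 : Matrix (Fin p) (Fin p) ℝ) Z)ᵀ).PosDef := by
  intro Z hZ
  have hD := fromCols_one_mul_fromBlocks_zero_mul_transpose (β • (1 : Matrix (Fin p) (Fin p) ℝ)) Z
  rw [← conjTranspose_eq_transpose_of_trivial] at hZ hD ⊢
  refine posDef_mul_mul_conjTranspose_of_posSemidef_sub_smul_sub _ hα hcert hZ ?_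
  rw [hD]
  exact PosDef.one.smul hβ

/-- Sufficiency direction of the matrix S-lemma: if `M - αN ⪰ diag(βI, 0)` for
some `α ≥ 0`, `β > 0`, then every `Z` satisfying the QMI for `N` satisfies the
strict QMI for `M`. -/
theorem matrix_s_lemma_sufficiency
    (p q : ℕ)
    (M N : Matrix (Fin p ⊕ Fin q) (Fin p ⊕ Fin q) ℝ)
    (hM : Mᵀ = M) (hN : Nᵀ = N)
    (hN22 : (-(N.toBlocks₂₂)).PosDef)
    (hslater : ∃ Zbar : Matrix (Fin p) (Fin q) ℝ,
      ((Matrix.fromCols (1 : Matrix (Fin p) (Fin p) ℝ) Zbar) * N *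
       (Matrix.fromCols (1 : Matrix (Fin p) (Fin p) ℝ) Zbar)ᵀ).PosDef)
    (α β : ℝ) (hα : 0 ≤ α) (hβ : 0 < β)
    (hcert : (M - α • N -
      Matrix.fromBlocks (β • (1 : Matrix (Fin p) (Fin p) ℝ)) 0 0 0).PosSemidef) :
    ∀ Z : Matrix (Fin p) (Fin q) ℝ,
      ((Matrix.fromCols (1 : Matrix (Fin p) (Fin p) ℝ) Z) * N *
       (Matrix.fromCols (1 : Matrix (Fin p) (Fin p) ℝ) Z)ᵀ).PosSemidef →
      ((Matrix.fromCols (1 : Matrix (Fin p) (Fin p) ℝ) Z) * M *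
       (Matrix.fromCols (1 : Matrix (Fin p) (Fin p) ℝ) Z)ᵀ).PosDef :=
  matrix_s_lemma_sufficiency_general p q M N α β hα hβ hcert
end
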